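/- arXiv:1510.04381 — 2 statements merged into one kernel-verified Lean document; each statement's English description precedes it below -/
import Mathlib

section
/- Every solvable polynomial algebra A = K[a_1,…,a_n] is left Noetherian and right Noetherian. -/
/-!
By (S2), left multiplication by a basis monomial `a^γ` shifts the leading exponent:
`LM(a^γ f) = γ + LM(f)`. Hence if `g` lies in a left ideal `N` and `LM(g) ≤ LM(f)`
componentwise, a scalar multiple of `a^(LM f - LM g) g ∈ N` cancels the leading term of `f`, and
since the monomial ordering is well-founded, `N` is generated by elements realising the minimal
leading exponents of `N`. By Dickson's lemma there are only finitely many of these.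
Only the basis and (S2) enter, never the generators, and (S2) for `A` is (S2) for `Aᵐᵒᵖ`
with the same basis, since `a^α * a^β` in `Aᵐᵒᵖ` is `a^β a^α` in `A`.
-/

noncomputable section

open scoped BigOperators

/-- A monomial ordering on the exponent monoid `ℕ^n`: a well-ordering, total and transitive,
admitting `0` (i.e. the monomial `1`) as least element and compatible with addition of
exponents (i.e. with multiplication of monomials from both sides). -/
structure MonOrder (n : ℕ) where
  lt : (Fin n → ℕ) → (Fin n → ℕ) → Prop
  wf : WellFounded lt
  lt_trans : ∀ {α β γ}, lt α β → lt β γ → lt α γ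
  lt_total : ∀ α β, lt α β ∨ α = β ∨ lt β α
  zero_min : ∀ α : Fin n → ℕ, α ≠ 0 → lt 0 α
  add_right : ∀ {α β : Fin n → ℕ} (γ : Fin n → ℕ), lt α β → lt (α + γ) (β + γ)

/-- The ordered monomial `a₁^{α 1} ⋯ a_n^{α n}` in the generators `a`. -/
def SolvMono {A : Type*} [Ring A] {n : ℕ} (a : Fin n → A) (α : Fin n → ℕ) : A :=
  ((List.finRange n).map fun i => a i ^ α i).prod

/-- A solvable polynomial algebra structure on a `K`-algebra `A` with generators
`gen 1, …, gen n`:  (S1) the ordered monomials in the generators form a PBW `K`-basis;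
(S2) there is a monomial ordering `ord` such that
`a^α a^β = λ_{α,β} a^{α+β} + (terms ≺ a^{α+β})` with `λ_{α,β} ≠ 0`. -/
structure SolvAlg (K : Type*) [Field K] (A : Type*) [Ring A] [Algebra K A] (n : ℕ) where
  gen : Fin n → A
  basis : Module.Basis (Fin n → ℕ) K A
  basis_eq : ∀ α, basis α = SolvMono gen α
  ord : MonOrder n
  s2_lc : ∀ α β, basis.repr (basis α * basis β) (α + β) ≠ 0
  s2_lower : ∀ α β δ, δ ∈ (basis.repr (basis α * basis β)).support → δ ≠ α + β →
    ord.lt δ (α + β)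

namespace SolvAlg

variable {K : Type*} [Field K] {A : Type*} [Ring A] [Algebra K A] {n : ℕ}

/-- `α` is the exponent of the leading monomial of `f` (so in particular `f ≠ 0`). -/
def IsLM (S : SolvAlg K A n) (f : A) (α : Fin n → ℕ) : Prop :=
  α ∈ (S.basis.repr f).support ∧
    ∀ β ∈ (S.basis.repr f).support, β ≠ α → S.ord.lt β α

/-- Left division of monomials: `a^α |_L a^β` iff `a^β = LM(a^γ a^α)` for some monomial `a^γ`. -/
def DvdL (S : SolvAlg K A n) (α β : Fin n → ℕ) : Prop :=
  ∃ γ, S.IsLM (S.basis γ * S.basis α) β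

/-- `α ⪯ β` for the monomial ordering. -/
def LEord (S : SolvAlg K A n) (α β : Fin n → ℕ) : Prop :=
  α = β ∨ S.ord.lt α β

/-- `G` is a left Gröbner basis of the left ideal `N`. -/
def IsGBIdeal (S : SolvAlg K A n) (N : Ideal A) (G : Set A) : Prop :=
  G ⊆ (N : Set A) ∧ (0 : A) ∉ G ∧
    ∀ f ∈ N, f ≠ 0 → ∃ g ∈ G, ∃ α β, S.IsLM g α ∧ S.IsLM f β ∧ S.DvdL α β

/-- The set of (exponents of) normal monomials mod `G`. -/
def NormalSet (S : SolvAlg K A n) (G : Set A) : Set (Fin n → ℕ) :=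
  {γ | ∀ g ∈ G, ∀ α, S.IsLM g α → ¬ S.DvdL α γ}

/-- A minimal left Gröbner basis: no proper subset is again a left Gröbner basis. -/
def IsMinimalGBIdeal (S : SolvAlg K A n) (N : Ideal A) (G : Set A) : Prop :=
  IsGBIdeal S N G ∧ ∀ G' : Set A, G' ⊂ G → ¬ IsGBIdeal S N G'

/-- A reduced left Gröbner basis: minimal, monic, and all tails normal mod `G`. -/
def IsReducedGBIdeal (S : SolvAlg K A n) (N : Ideal A) (G : Set A) : Prop :=
  IsMinimalGBIdeal S N G ∧
  (∀ g ∈ G, ∀ α, S.IsLM g α → S.basis.repr g α = 1) ∧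
  (∀ g ∈ G, ∀ α, S.IsLM g α →
    g - S.basis α ∈ Submodule.span K ((fun γ => S.basis γ) '' NormalSet S G))

/-- The set of monomials `a^α e_i` occurring in an element `ξ` of the free module `A^s`. -/
def MSupp (S : SolvAlg K A n) {s : ℕ} (ξ : Fin s → A) : Set ((Fin n → ℕ) × Fin s) :=
  {p | S.basis.repr (ξ p.2) p.1 ≠ 0}

/-- `p` is the leading monomial of `ξ` with respect to the (left monomial) ordering `r`
on the monomials of the free module `A^s`. -/
def IsLMMr (S : SolvAlg K A n) {s : ℕ}
    (r : ((Fin n → ℕ) × Fin s) → ((Fin n → ℕ) × Fin s) → Prop)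
    (ξ : Fin s → A) (p : (Fin n → ℕ) × Fin s) : Prop :=
  p ∈ S.MSupp ξ ∧ ∀ q ∈ S.MSupp ξ, q ≠ p → r q p

/-- Left division of module monomials:  `a^α e_i |_L a^β e_j` iff `i = j` and
`a^β e_i = LM(a^γ · a^α e_i)` for some `a^γ`. -/
def MDvdL (S : SolvAlg K A n) {s : ℕ} (p q : (Fin n → ℕ) × Fin s) : Prop :=
  p.2 = q.2 ∧ ∃ γ, S.IsLM (S.basis γ * S.basis p.1) q.1

/-- `G` is a left Gröbner basis of the set (submodule) `Nset` of the free module `A^s`,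
with respect to the left monomial ordering `r`. -/
def IsGBrel (S : SolvAlg K A n) {s : ℕ}
    (r : ((Fin n → ℕ) × Fin s) → ((Fin n → ℕ) × Fin s) → Prop)
    (Nset : Set (Fin s → A)) (G : Set (Fin s → A)) : Prop :=
  G ⊆ Nset ∧ (0 : Fin s → A) ∉ G ∧
    ∀ ξ ∈ Nset, ξ ≠ 0 → ∃ γ ∈ G, ∃ p q, S.IsLMMr r γ p ∧ S.IsLMMr r ξ q ∧ S.MDvdL p q

/-- The left S-polynomial `S_ℓ(ξ, ζ)` of `ξ, ζ` whose leading monomials are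
`a^α e_i` and `a^β e_j` respectively. -/
def spolyData (S : SolvAlg K A n) {s : ℕ} (ξ ζ : Fin s → A)
    (α β : Fin n → ℕ) (i j : Fin s) : Fin s → A :=
  if i = j then
    (S.basis.repr ((S.basis ((fun k => max (α k) (β k)) - α) • ξ) i)
        (fun k => max (α k) (β k)))⁻¹ •
      (S.basis ((fun k => max (α k) (β k)) - α) • ξ) -
    (S.basis.repr ((S.basis ((fun k => max (α k) (β k)) - β) • ζ) i)
        (fun k => max (α k) (β k)))⁻¹ •
      (S.basis ((fun k => max (α k) (β k)) - β) • ζ)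
  else 0

end SolvAlg

/-- A left monomial ordering on the monomials `{a^α e_i}` of the free module `A^s`:
a total ordering compatible with the (left) multiplication by monomials of `A` and
restricting on each component to the monomial ordering of `A`. -/
structure ModOrder {K : Type*} [Field K] {A : Type*} [Ring A] [Algebra K A] {n : ℕ}
    (S : SolvAlg K A n) (s : ℕ) where
  lt : ((Fin n → ℕ) × Fin s) → ((Fin n → ℕ) × Fin s) → Prop
  lt_irrefl : ∀ p, ¬ lt p p
  lt_trans : ∀ {p q r}, lt p q → lt q r → lt p r
  lt_total : ∀ p q, lt p q ∨ p = q ∨ lt q p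
  compat : ∀ {α β : Fin n → ℕ} {i j : Fin s} (γ δ ε : Fin n → ℕ),
    lt (α, i) (β, j) → SolvAlg.IsLM S (S.basis γ * S.basis α) δ →
    SolvAlg.IsLM S (S.basis γ * S.basis β) ε → lt (δ, i) (ε, j)
  base : ∀ (α β : Fin n → ℕ) (i : Fin s), S.ord.lt α β → lt (α, i) (β, i)

namespace MonOrder

variable {n : ℕ} (o : MonOrder n) {K : Type*} [Field K]
  {c d : (Fin n → ℕ) →₀ K} {α β δ : Fin n → ℕ}

theorem lt_irrefl (α : Fin n → ℕ) : ¬ o.lt α α :=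
  o.wf.irrefl.irrefl α

theorem add_left (γ : Fin n → ℕ) (h : o.lt α β) : o.lt (γ + α) (γ + β) := by
  simpa only [add_comm γ] using o.add_right γ h

def IsLeading (c : (Fin n → ℕ) →₀ K) (α : Fin n → ℕ) : Prop :=
  α ∈ c.support ∧ ∀ β ∈ c.support, β ≠ α → o.lt β α

variable {o}

theorem exists_isLeading (hc : c ≠ 0) : ∃ α, o.IsLeading c α := by
  have : IsStrictOrder _ (flip o.lt) :=
    { irrefl := o.lt_irrefl, trans := fun _ _ _ h₁ h₂ => o.lt_trans h₂ h₁ }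
  obtain ⟨α₀, hα₀⟩ := Finsupp.support_nonempty_iff.2 hc
  obtain ⟨⟨α, hα⟩, -, hmax⟩ := (c.support.finite_toSet.wellFoundedOn (r := flip o.lt)).has_min
    Set.univ ⟨⟨α₀, hα₀⟩, trivial⟩
  refine ⟨α, hα, fun β hβ hne => ?_⟩
  rcases o.lt_total β α with h | h | h
  exacts [h, absurd h hne, absurd h (hmax ⟨β, hβ⟩ trivial)]

theorem IsLeading.lt_of_mem_support (hc : o.IsLeading c α) (hδ : δ ∈ c.support)
    (hαβ : o.lt α β) : o.lt δ β := by
  rcases eq_or_ne δ α with rfl | hne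
  exacts [hαβ, o.lt_trans (hc.2 δ hδ hne) hαβ]

theorem IsLeading.smul (hc : o.IsLeading c α) {k : K} (hk : k ≠ 0) :
    o.IsLeading (k • c) α := by
  simpa only [IsLeading, Finsupp.support_smul_eq hk] using hc

theorem IsLeading.add_of_lt (hc : o.IsLeading c α) (hd : ∀ β ∈ d.support, o.lt β α) :
    o.IsLeading (c + d) α := by
  have hdα : d α = 0 := Finsupp.notMem_support_iff.1 fun h => o.lt_irrefl α (hd α h)
  refine ⟨by simpa [hdα] using hc.1, fun β hβ hne => ?_⟩
  rcases Finset.mem_union.1 (Finsupp.support_add hβ) with hβ | hβ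
  exacts [hc.2 β hβ hne, hd β hβ]

theorem IsLeading.lt_of_mem_support_sub_smul (hc : o.IsLeading c α) (hd : o.IsLeading d α)
    (hβ : β ∈ (c - (c α / d α) • d).support) : o.lt β α := by
  have hne : β ≠ α := by
    rintro rfl
    refine Finsupp.mem_support_iff.1 hβ ?_
    simp [div_mul_cancel₀ _ (Finsupp.mem_support_iff.1 hd.1)]
  rcases Finset.mem_union.1 (Finsupp.support_sub hβ) with hβ | hβ
  exacts [hc.2 β hβ hne, hd.2 β (Finsupp.support_smul hβ) hne]

end MonOrder

/-- Condition (S2) of a solvable polynomial algebra, as a property of the PBW basis alone. -/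
structure IsSolvableBasis {n : ℕ} (o : MonOrder n) {K : Type*} [Field K] {A : Type*} [Ring A]
    [Algebra K A] (b : Module.Basis (Fin n → ℕ) K A) : Prop where
  repr_mul_ne_zero : ∀ α β, b.repr (b α * b β) (α + β) ≠ 0
  lt_of_mem_support_mul : ∀ α β δ, δ ∈ (b.repr (b α * b β)).support → δ ≠ α + β →
    o.lt δ (α + β)

namespace IsSolvableBasis

variable {n : ℕ} {o : MonOrder n} {K : Type*} [Field K] {A : Type*} [Ring A] [Algebra K A]
  {b : Module.Basis (Fin n → ℕ) K A}

theorem isLeading_mul (hb : IsSolvableBasis o b) (α β : Fin n → ℕ) :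
    o.IsLeading (b.repr (b α * b β)) (α + β) :=
  ⟨Finsupp.mem_support_iff.2 (hb.repr_mul_ne_zero α β), hb.lt_of_mem_support_mul α β⟩

theorem lt_of_mem_support_basis_mul (hb : IsSolvableBasis o b) (γ : Fin n → ℕ) {r : A}
    {α : Fin n → ℕ} (hr : ∀ β ∈ (b.repr r).support, o.lt β α) :
    ∀ δ ∈ (b.repr (b γ * r)).support, o.lt δ (γ + α) := by
  intro δ hδ
  have hexp : b γ * r = ∑ β ∈ (b.repr r).support, b.repr r β • (b γ * b β) := by
    conv_lhs => rw [← b.linearCombination_repr r, Finsupp.linearCombination_apply, Finsupp.sum,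
      Finset.mul_sum]
    simp only [mul_smul_comm]
  rw [hexp, map_sum] at hδ
  obtain ⟨β, hβ, hδβ⟩ := Finset.mem_biUnion.1 (Finsupp.support_finsetSum hδ)
  rw [map_smul] at hδβ
  exact (hb.isLeading_mul γ β).lt_of_mem_support (Finsupp.support_smul hδβ)
    (o.add_left γ (hr β hβ))

theorem isLeading_basis_mul (hb : IsSolvableBasis o b) (γ : Fin n → ℕ) {f : A}
    {α : Fin n → ℕ} (hf : o.IsLeading (b.repr f) α) :
    o.IsLeading (b.repr (b γ * f)) (γ + α) := by
  set r := b.repr.symm ((b.repr f).erase α)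
  have hsplit : f = b.repr f α • b α + r := b.repr.injective <| by
    simp [r, Finsupp.single_add_erase]
  have hr : ∀ β ∈ (b.repr r).support, o.lt β α := fun β hβ => by
    simp only [r, LinearEquiv.apply_symm_apply, Finsupp.support_erase, Finset.mem_erase] at hβ
    exact hf.2 β hβ.2 hβ.1
  rw [hsplit, mul_add, mul_smul_comm, map_add, map_smul]
  exact ((hb.isLeading_mul γ α).smul (Finsupp.mem_support_iff.1 hf.1)).add_of_lt
    (hb.lt_of_mem_support_basis_mul γ hr)

theorem mulOpposite (hb : IsSolvableBasis o b) :
    IsSolvableBasis o (b.map (MulOpposite.opLinearEquiv K)) := by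
  set b' := b.map (MulOpposite.opLinearEquiv K)
  have hrepr (α β : Fin n → ℕ) : b'.repr (b' α * b' β) = b.repr (b β * b α) := by
    simp [b', Module.Basis.map_apply, Module.Basis.map_repr]
  refine ⟨fun α β => ?_, fun α β δ hδ hne => ?_⟩
  · simpa only [hrepr, add_comm α β] using hb.repr_mul_ne_zero β α
  · rw [hrepr, add_comm α β] at *
    exact hb.lt_of_mem_support_mul β α δ hδ hne

theorem le_span_of_isLeading (hb : IsSolvableBasis o b) {N : Submodule A A} {G : Set A}
    (hGN : G ⊆ N) (hG : ∀ f ∈ N, ∀ β, o.IsLeading (b.repr f) β →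
      ∃ g ∈ G, ∃ α ≤ β, o.IsLeading (b.repr g) α) :
    N ≤ Submodule.span A G := by
  suffices key : ∀ β, ∀ f ∈ N, o.IsLeading (b.repr f) β → f ∈ Submodule.span A G by
    intro f hf
    rcases eq_or_ne f 0 with rfl | hf0
    · exact Submodule.zero_mem _
    obtain ⟨β, hβ⟩ := MonOrder.exists_isLeading (b.repr.map_ne_zero_iff.2 hf0)
    exact key β f hf hβ
  intro β
  induction β using o.wf.induction with
  | _ β ih =>
  intro f hfN hf
  obtain ⟨g, hgG, α, hαβ, hg⟩ := hG f hfN β hf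
  set h := b (β - α) * g
  have hh : o.IsLeading (b.repr h) β := by
    simpa only [tsub_add_cancel_of_le hαβ] using hb.isLeading_basis_mul (β - α) hg
  set k := b.repr f β / b.repr h β
  have hkh (P : Submodule A A) (hgP : g ∈ P) : k • h ∈ P := by
    rw [← smul_mul_assoc]
    exact P.smul_mem _ hgP
  rw [← sub_add_cancel f (k • h)]
  refine Submodule.add_mem _ ?_ (hkh _ (Submodule.subset_span hgG))
  rcases eq_or_ne (f - k • h) 0 with hf' | hf'
  · rw [hf']
    exact Submodule.zero_mem _
  obtain ⟨β', hβ'⟩ := MonOrder.exists_isLeading (b.repr.map_ne_zero_iff.2 hf')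
  have hlt : o.lt β' β := by
    rw [map_sub, map_smul] at hβ'
    exact hf.lt_of_mem_support_sub_smul hh hβ'.1
  exact ih β' hlt _ (N.sub_mem hfN (hkh N (hGN hgG))) hβ'

theorem submodule_fg (hb : IsSolvableBasis o b) (N : Submodule A A) : N.FG := by
  set E := {α | ∃ f ∈ N, o.IsLeading (b.repr f) α}
  set M := {α | Minimal (· ∈ E) α}
  choose! g hgN hg using fun α (hα : α ∈ M) => hα.prop
  refine Submodule.fg_def.2 ⟨g '' M, ?_, le_antisymm ?_ ?_⟩
  · exact (WellQuasiOrderedLE.finite_of_isAntichain (setOfPred_minimal_antichain _)).image g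
  · rw [Submodule.span_le]
    rintro _ ⟨α, hα, rfl⟩
    exact hgN α hα
  · refine hb.le_span_of_isLeading (by rintro _ ⟨α, hα, rfl⟩; exact hgN α hα) ?_
    intro f hf β hβ
    obtain ⟨α, hαβ, hα⟩ := (Set.isPWO_of_wellQuasiOrderedLE E).exists_le_minimal ⟨f, hf, hβ⟩
    exact ⟨g α, Set.mem_image_of_mem g hα, α, hαβ, hg α hα⟩

theorem isNoetherianRing (hb : IsSolvableBasis o b) : IsNoetherianRing A :=
  isNoetherianRing_iff.2 ⟨hb.submodule_fg⟩

end IsSolvableBasis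

/-- Corollary 1.3.3: every solvable polynomial algebra is left and right Noetherian. -/
theorem solvAlg_noetherian {K : Type*} [Field K] {A : Type*} [Ring A] [Algebra K A]
    {n : ℕ} (S : SolvAlg K A n) :
    IsNoetherianRing A ∧ IsNoetherianRing Aᵐᵒᵖ :=
  have hS : IsSolvableBasis S.ord S.basis := ⟨S.s2_lc, S.s2_lower⟩
  ⟨hS.isNoetherianRing, hS.mulOpposite.isNoetherianRing⟩
end
end

section
/- Let A = K[a_1,…,a_n] be a solvable polynomial algebra whose monomial ordering is a graded monomial ordering ≺_gr with respect to a positive-degree function d (so that A is ℕ-filtered by F_pA = K-span{a^α ∈ 𝔅 | d(a^α) ≤ p}), let L = ⊕_{i=1}^s A e_i be a filtered free A-module with filtration F_qL = K-span{a^α e_i | d(a^α) + b_i ≤ q} for assigned b_1,…,b_s ∈ ℕ, and let ≺_{e-gr} be a graded left monomial ordering on 𝔅(e). If 𝒢 = {g_1,…,g_m} is a left Gröbner basis, with respect to ≺_{e-gr}, of the submodule N = Σ_{i=1}^m A g_i of L, then 𝒢 is a standard basis of N with respect to the filtration F_qN = N ∩ F_qL induced by FL; that is, F_qN = Σ_{j=1}^m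 (Σ_{p + n_j ≤ q} F_pA) g_j for every q ∈ ℕ, where n_j is the fil-degree of g_j. -/
noncomputable section

open scoped BigOperators

/-- The degree of an exponent `α` with respect to the positive-degree function determined
by `dv`. -/
def degOf {n : ℕ} (dv : Fin n → ℕ) (α : Fin n → ℕ) : ℕ := ∑ i, α i * dv i

/-!
Division by the Gröbner basis. If `ζ ∈ N ∩ F_qL` has leading monomial `LM(a^γ · LM(g_j))`,
subtracting a suitable `c a^γ g_j` strictly lowers the leading monomial. Both orderings being
graded, `n_j` is the fil-degree of `LM(g_j)`, so `c a^γ ∈ F_{q-n_j}A` and the remainder stays in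
`F_qL`. The module ordering is well-founded (on each component it is the monomial ordering of `A`),
so the division terminates. The reverse inclusion is `F_pA · F_{n_j}L ⊆ F_{p+n_j}L`.
-/

lemma degOf_add {n : ℕ} (dv α β : Fin n → ℕ) :
    degOf dv (α + β) = degOf dv α + degOf dv β := by
  simp [degOf, add_mul, Finset.sum_add_distrib]

theorem Set.Finite.exists_min_of_isStrictOrder {α : Type*} {r : α → α → Prop}
    [IsStrictOrder α r] {t : Set α} (ht : t.Finite) (hne : t.Nonempty) :
    ∃ m ∈ t, ∀ x ∈ t, ¬ r x m := by
  obtain ⟨m, hm, hmin⟩ := (Set.wellFoundedOn_iff.1 (ht.wellFoundedOn (r := r))).has_min t hne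
  exact ⟨m, hm, fun x hx hxm => hmin x hx ⟨hxm, hx, hm⟩⟩

namespace Submodule

variable {ι K A M : Type*} [Fintype ι] [CommSemiring K] [Semiring A] [Algebra K A]
  [AddCommMonoid M] [Module A M] [Module K M] [IsScalarTower K A M]

def sumSMul (W : ι → Submodule K A) (g : ι → M) : Submodule K M :=
  (Submodule.pi Set.univ W).map ((Fintype.linearCombination A g).restrictScalars K)

theorem mem_sumSMul {W : ι → Submodule K A} {g : ι → M} {x : M} :
    x ∈ sumSMul W g ↔ ∃ f : ι → A, (∀ j, f j ∈ W j) ∧ x = ∑ j, f j • g j := by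
  simp [sumSMul, Fintype.linearCombination_apply, eq_comm]

theorem smul_mem_sumSMul [DecidableEq ι] {W : ι → Submodule K A} (g : ι → M) {j : ι} {a : A}
    (ha : a ∈ W j) : a • g j ∈ sumSMul W g := by
  refine mem_sumSMul.2 ⟨Pi.single j a, fun i => ?_, by simp [Pi.single_apply]⟩
  rcases eq_or_ne i j with rfl | hij
  · simpa using ha
  · simp [hij]

theorem sumSMul_le_span (W : ι → Submodule K A) (g : ι → M) :
    sumSMul W g ≤ (span A (Set.range g)).restrictScalars K := by
  intro x hx
  obtain ⟨f, -, rfl⟩ := mem_sumSMul.1 hx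
  exact sum_mem fun j _ => smul_mem _ (f j) (subset_span ⟨j, rfl⟩)

end Submodule

namespace SolvAlg

variable {K : Type*} [Field K] {A : Type*} [Ring A] [Algebra K A] {n : ℕ} (S : SolvAlg K A n)

theorem isLM_basis_mul_basis (γ α : Fin n → ℕ) : S.IsLM (S.basis γ * S.basis α) (γ + α) :=
  ⟨Finsupp.mem_support_iff.mpr (S.s2_lc γ α), fun _ hβ hne => S.s2_lower γ α _ hβ hne⟩

variable {S} in
theorem IsLM.unique {f : A} {α β : Fin n → ℕ} (hα : S.IsLM f α) (hβ : S.IsLM f β) : α = β := by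
  by_contra hne
  exact S.ord.wf.irrefl.irrefl α (S.ord.lt_trans (hβ.2 α hα.1 hne) (hα.2 β hβ.1 (Ne.symm hne)))

theorem repr_basis_mul (γ : Fin n → ℕ) (h : A) (δ : Fin n → ℕ) :
    S.basis.repr (S.basis γ * h) δ =
      ∑ α ∈ (S.basis.repr h).support,
        S.basis.repr h α * S.basis.repr (S.basis γ * S.basis α) δ := by
  conv_lhs => rw [← S.basis.linearCombination_repr h, Finsupp.linearCombination_apply,
    Finsupp.sum, Finset.mul_sum]
  simp only [mul_smul_comm, map_sum, map_smul, Finsupp.finsetSum_apply, Finsupp.smul_apply,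
    smul_eq_mul]

theorem exists_mem_support_of_repr_basis_mul_ne_zero {γ δ : Fin n → ℕ} {h : A}
    (hδ : S.basis.repr (S.basis γ * h) δ ≠ 0) :
    ∃ α ∈ (S.basis.repr h).support, δ ∈ (S.basis.repr (S.basis γ * S.basis α)).support := by
  rw [S.repr_basis_mul] at hδ
  obtain ⟨α, hα, hne⟩ := Finset.exists_ne_zero_of_sum_ne_zero hδ
  exact ⟨α, hα, Finsupp.mem_support_iff.mpr (right_ne_zero_of_mul hne)⟩

theorem degOf_le_of_mem_support_basis_mul {dv : Fin n → ℕ}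
    (hgr : ∀ α β, S.ord.lt α β → degOf dv α ≤ degOf dv β) {γ α δ : Fin n → ℕ}
    (hδ : δ ∈ (S.basis.repr (S.basis γ * S.basis α)).support) :
    degOf dv δ ≤ degOf dv γ + degOf dv α := by
  rw [← degOf_add]
  rcases eq_or_ne δ (γ + α) with rfl | hne
  · exact le_rfl
  · exact hgr _ _ (S.s2_lower γ α δ hδ hne)

def filtrationL (dv : Fin n → ℕ) {s : ℕ} (b : Fin s → ℕ) (q : ℕ) : Submodule K (Fin s → A) where
  carrier := {ξ | ∀ α i, S.basis.repr (ξ i) α ≠ 0 → degOf dv α + b i ≤ q}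
  zero_mem' := by simp
  add_mem' {ξ η} hξ hη α i h := by
    by_cases hξα : S.basis.repr (ξ i) α = 0
    · exact hη α i (by simpa [hξα] using h)
    · exact hξ α i hξα
  smul_mem' c ξ hξ α i h := hξ α i fun h0 => h (by simp [h0])

/-- `F_{q-c}A`, written with the shift `c` on the left: it is `0`, not `F_0A`, when `c > q`. -/
def filtrationA (dv : Fin n → ℕ) (c q : ℕ) : Submodule K A :=
  Submodule.span K {x | ∃ α, degOf dv α + c ≤ q ∧ x = S.basis α}

variable {dv : Fin n → ℕ} {s : ℕ} {b : Fin s → ℕ}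

theorem filtrationL_mono {c q : ℕ} (h : c ≤ q) : S.filtrationL dv b c ≤ S.filtrationL dv b q :=
  fun _ hξ α i hα => (hξ α i hα).trans h

theorem basis_smul_mem_filtrationL (hgr : ∀ α β, S.ord.lt α β → degOf dv α ≤ degOf dv β)
    (γ : Fin n → ℕ) {c : ℕ} {ξ : Fin s → A} (hξ : ξ ∈ S.filtrationL dv b c) :
    S.basis γ • ξ ∈ S.filtrationL dv b (degOf dv γ + c) := by
  intro δ i hδ
  obtain ⟨α, hα, hδα⟩ := S.exists_mem_support_of_repr_basis_mul_ne_zero hδ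
  have := hξ α i (Finsupp.mem_support_iff.mp hα)
  have := S.degOf_le_of_mem_support_basis_mul hgr hδα
  omega

theorem smul_mem_filtrationL (hgr : ∀ α β, S.ord.lt α β → degOf dv α ≤ degOf dv β)
    {c q : ℕ} {x : A} (hx : x ∈ S.filtrationA dv c q) {ξ : Fin s → A}
    (hξ : ξ ∈ S.filtrationL dv b c) : x • ξ ∈ S.filtrationL dv b q := by
  induction hx using Submodule.span_induction with
  | mem x hx =>
    obtain ⟨γ, hγ, rfl⟩ := hx
    exact S.filtrationL_mono hγ (S.basis_smul_mem_filtrationL hgr γ hξ)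
  | zero => simp
  | add x y _ _ hx hy => simpa [add_smul] using add_mem hx hy
  | smul k x _ hx => simpa [smul_assoc] using Submodule.smul_mem _ k hx

theorem sumSMul_filtrationA_le (hgr : ∀ α β, S.ord.lt α β → degOf dv α ≤ degOf dv β)
    {m : ℕ} {g : Fin m → Fin s → A} {nj : Fin m → ℕ}
    (hg : ∀ j, g j ∈ S.filtrationL dv b (nj j)) (q : ℕ) :
    Submodule.sumSMul (fun j => S.filtrationA dv (nj j) q) g ≤ S.filtrationL dv b q := by
  intro ξ hξ
  obtain ⟨f, hf, rfl⟩ := Submodule.mem_sumSMul.1 hξ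
  exact sum_mem fun j _ => S.smul_mem_filtrationL hgr (hf j) (hg j)

end SolvAlg

namespace ModOrder

variable {K : Type*} [Field K] {A : Type*} [Ring A] [Algebra K A] {n : ℕ}
  {S : SolvAlg K A n} {s : ℕ} (O : ModOrder S s)

instance : IsStrictOrder ((Fin n → ℕ) × Fin s) O.lt where
  irrefl := O.lt_irrefl
  trans _ _ _ := O.lt_trans

/-- Among the componentwise `≺`-minima of a nonempty set (at most one per component, so finitely
many) an `O`-minimal one is minimal in the whole set. -/
theorem wellFounded : WellFounded O.lt := by
  refine WellFounded.wellFounded_iff_has_min.2 fun M hM => ?_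
  let C : Set ((Fin n → ℕ) × Fin s) := {p | p ∈ M ∧ ∀ α, (α, p.2) ∈ M → ¬ S.ord.lt α p.1}
  have hmin : ∀ p ∈ M, ∃ c ∈ C, c.2 = p.2 ∧ (c = p ∨ O.lt c p) := by
    rintro ⟨α, i⟩ hp
    have hne : {β | (β, i) ∈ M}.Nonempty := ⟨α, hp⟩
    refine ⟨(S.ord.wf.min _ hne, i), ⟨S.ord.wf.min_mem _ hne,
      fun β hβ => S.ord.wf.not_lt_min _ hβ⟩, rfl, ?_⟩
    rcases S.ord.lt_total (S.ord.wf.min _ hne) α with h | h | h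
    · exact Or.inr (O.base _ _ i h)
    · exact Or.inl (by rw [h])
    · exact absurd h (S.ord.wf.not_lt_min _ hp)
  have hCfin : C.Finite := by
    refine Set.Finite.of_finite_image (Set.toFinite (Prod.snd '' C)) fun p hp p' hp' h => ?_
    rcases S.ord.lt_total p.1 p'.1 with hlt | heq | hlt
    · exact absurd hlt (hp'.2 p.1 (by rw [← h]; exact hp.1))
    · exact Prod.ext heq h
    · exact absurd hlt (hp.2 p'.1 (by rw [h]; exact hp'.1))
  obtain ⟨c₀, hc₀, -⟩ := hmin _ hM.some_mem
  obtain ⟨m, hmC, hm⟩ := hCfin.exists_min_of_isStrictOrder (r := O.lt) ⟨c₀, hc₀⟩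
  refine ⟨m, hmC.1, fun x hx hxm => ?_⟩
  obtain ⟨c, hc, -, rfl | hcx⟩ := hmin x hx
  · exact hm c hc hxm
  · exact hm c hc (O.lt_trans hcx hxm)

end ModOrder

namespace SolvAlg

variable {K : Type*} [Field K] {A : Type*} [Ring A] [Algebra K A] {n : ℕ} (S : SolvAlg K A n)
  {s : ℕ}

theorem msupp_finite (ξ : Fin s → A) : (S.MSupp ξ).Finite := by
  refine (Set.finite_iUnion fun i =>
    ((S.basis.repr (ξ i)).support.finite_toSet.image (·, i))).subset ?_
  rintro ⟨α, i⟩ h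
  exact Set.mem_iUnion.2 ⟨i, α, Finsupp.mem_support_iff.2 h, rfl⟩

theorem exists_isLMMr (O : ModOrder S s) {ξ : Fin s → A} (hξ : ξ ≠ 0) :
    ∃ p, S.IsLMMr O.lt ξ p := by
  have hne : (S.MSupp ξ).Nonempty := by
    obtain ⟨i, hi⟩ := Function.ne_iff.mp hξ
    obtain ⟨α, hα⟩ := Finsupp.ne_iff.mp ((map_ne_zero_iff _ S.basis.repr.injective).2 hi)
    exact ⟨(α, i), by simpa [MSupp] using hα⟩
  obtain ⟨p, hp, hmax⟩ :=
    (S.msupp_finite ξ).exists_min_of_isStrictOrder (r := Function.swap O.lt) hne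
  refine ⟨p, hp, fun x hx hxp => ?_⟩
  rcases O.lt_total x p with h | h | h
  · exact h
  · exact absurd h hxp
  · exact absurd h (hmax x hx)

variable {S} in
theorem IsLMMr.ne_zero {r : ((Fin n → ℕ) × Fin s) → ((Fin n → ℕ) × Fin s) → Prop}
    {ξ : Fin s → A} {p : (Fin n → ℕ) × Fin s} (hp : S.IsLMMr r ξ p) : ξ ≠ 0 :=
  fun h => hp.1 (by simp [h])

variable {S} in
theorem IsLMMr.unique (O : ModOrder S s) {ξ : Fin s → A} {p p' : (Fin n → ℕ) × Fin s}
    (hp : S.IsLMMr O.lt ξ p) (hp' : S.IsLMMr O.lt ξ p') : p = p' := by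
  by_contra hne
  exact O.lt_irrefl p (O.lt_trans (hp'.2 p hp.1 hne) (hp.2 p' hp'.1 (Ne.symm hne)))

theorem lt_of_lt_of_mem_support_basis_mul (O : ModOrder S s) {γ α α' δ : Fin n → ℕ}
    {i i' : Fin s} (hlt : O.lt (α', i') (α, i))
    (hδ : δ ∈ (S.basis.repr (S.basis γ * S.basis α')).support) :
    O.lt (δ, i') (γ + α, i) := by
  have h := O.compat γ (γ + α') (γ + α) hlt (S.isLM_basis_mul_basis γ α')
    (S.isLM_basis_mul_basis γ α)
  rcases eq_or_ne δ (γ + α') with rfl | hne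
  · exact h
  · exact O.lt_trans (O.base _ _ i' (S.s2_lower γ α' δ hδ hne)) h

theorem isLMMr_basis_smul (O : ModOrder S s) {ξ : Fin s → A} {α : Fin n → ℕ} {i : Fin s}
    (hξ : S.IsLMMr O.lt ξ (α, i)) (γ : Fin n → ℕ) :
    S.IsLMMr O.lt (S.basis γ • ξ) (γ + α, i) := by
  have hlower : ∀ α' ∈ (S.basis.repr (ξ i)).support, α' ≠ α →
      S.basis.repr (S.basis γ * S.basis α') (γ + α) = 0 := by
    intro α' hα' hne
    by_contra h
    exact O.lt_irrefl _ (S.lt_of_lt_of_mem_support_basis_mul O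
      (hξ.2 (α', i) (Finsupp.mem_support_iff.1 hα') (by simp [hne])) (Finsupp.mem_support_iff.2 h))
  refine ⟨?_, ?_⟩
  · show S.basis.repr (S.basis γ * ξ i) (γ + α) ≠ 0
    rw [S.repr_basis_mul, Finset.sum_eq_single_of_mem α (Finsupp.mem_support_iff.2 hξ.1)
      fun α' hα' hne => by rw [hlower α' hα' hne, mul_zero]]
    exact mul_ne_zero hξ.1 (S.s2_lc γ α)
  · rintro ⟨δ, i'⟩ hδ hne
    obtain ⟨α', hα', hδα'⟩ := S.exists_mem_support_of_repr_basis_mul_ne_zero hδ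
    by_cases h : (α', i') = (α, i)
    · obtain ⟨rfl, rfl⟩ := Prod.ext_iff.1 h
      exact O.base _ _ _ (S.s2_lower γ α' δ hδα' fun h => hne (by rw [h]))
    · exact S.lt_of_lt_of_mem_support_basis_mul O (hξ.2 _ (Finsupp.mem_support_iff.1 hα') h) hδα'

variable {S} in
theorem IsLMMr.lt_of_mem_msupp_sub_smul
    {r : ((Fin n → ℕ) × Fin s) → ((Fin n → ℕ) × Fin s) → Prop} {ξ η : Fin s → A}
    {p x : (Fin n → ℕ) × Fin s} (hξ : S.IsLMMr r ξ p) (hη : S.IsLMMr r η p)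
    (hx : x ∈ S.MSupp (ξ - (S.basis.repr (ξ p.2) p.1 / S.basis.repr (η p.2) p.1) • η)) :
    r x p := by
  set c := S.basis.repr (ξ p.2) p.1 / S.basis.repr (η p.2) p.1
  have hrepr : ∀ y : (Fin n → ℕ) × Fin s, S.basis.repr ((ξ - c • η) y.2) y.1 =
      S.basis.repr (ξ y.2) y.1 - c * S.basis.repr (η y.2) y.1 := fun y => by simp
  have hx' : S.basis.repr (ξ x.2) x.1 - c * S.basis.repr (η x.2) x.1 ≠ 0 := hrepr x ▸ hx
  rcases eq_or_ne x p with rfl | hxp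
  · exact absurd (by rw [div_mul_cancel₀ _ hη.1, sub_self]) hx'
  · by_cases h : S.basis.repr (ξ x.2) x.1 = 0
    · exact hη.2 x (fun h' => hx' (by rw [h, h', mul_zero, sub_zero])) hxp
    · exact hξ.2 x h hxp

variable {dv : Fin n → ℕ} {b : Fin s → ℕ}

theorem degOf_add_le_of_isLMMr (O : ModOrder S s)
    (hOgr : ∀ p q : (Fin n → ℕ) × Fin s,
      O.lt p q → degOf dv p.1 + b p.2 ≤ degOf dv q.1 + b q.2)
    {ξ : Fin s → A} {p x : (Fin n → ℕ) × Fin s} (hp : S.IsLMMr O.lt ξ p) (hx : x ∈ S.MSupp ξ) :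
    degOf dv x.1 + b x.2 ≤ degOf dv p.1 + b p.2 := by
  rcases eq_or_ne x p with rfl | hxp
  · exact le_rfl
  · exact hOgr x p (hp.2 x hx hxp)

end SolvAlg

namespace SolvAlg

variable {K : Type*} [Field K] {A : Type*} [Ring A] [Algebra K A] {n : ℕ} (S : SolvAlg K A n)
  {dv : Fin n → ℕ} {s : ℕ} {b : Fin s → ℕ}

theorem mem_sumSMul_of_isGBrel (hgr : ∀ α β, S.ord.lt α β → degOf dv α ≤ degOf dv β)
    (O : ModOrder S s)
    (hOgr : ∀ p q : (Fin n → ℕ) × Fin s,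
      O.lt p q → degOf dv p.1 + b p.2 ≤ degOf dv q.1 + b q.2)
    {m : ℕ} {g : Fin m → Fin s → A}
    (hGB : S.IsGBrel O.lt (Submodule.span A (Set.range g) : Set (Fin s → A)) (Set.range g))
    {nj : Fin m → ℕ} (hg : ∀ j, g j ∈ S.filtrationL dv b (nj j))
    (hnj : ∀ j, ∃ α i, S.basis.repr (g j i) α ≠ 0 ∧ degOf dv α + b i = nj j)
    {q : ℕ} {ζ : Fin s → A} (hζN : ζ ∈ Submodule.span A (Set.range g))
    (hζq : ζ ∈ S.filtrationL dv b q) :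
    ζ ∈ Submodule.sumSMul (fun j => S.filtrationA dv (nj j) q) g := by
  classical
  set P := Submodule.sumSMul (fun j => S.filtrationA dv (nj j) q) g
  suffices key : ∀ p ζ, S.IsLMMr O.lt ζ p → ζ ∈ Submodule.span A (Set.range g) →
      ζ ∈ S.filtrationL dv b q → ζ ∈ P by
    rcases eq_or_ne ζ 0 with rfl | hζ0
    · exact zero_mem P
    · obtain ⟨p, hp⟩ := S.exists_isLMMr O hζ0
      exact key p ζ hp hζN hζq
  intro p
  induction p using O.wellFounded.induction with | _ p ih => ?_
  intro ζ hp hζN hζq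
  obtain ⟨_, ⟨j, rfl⟩, ⟨α, i⟩, p', hgj, hp', hij, γ, hγ⟩ := hGB.2.2 ζ hζN hp.ne_zero
  obtain rfl : p = (γ + α, i) := by
    rw [hp.unique O hp', Prod.ext_iff]
    exact ⟨hγ.unique (S.isLM_basis_mul_basis γ α), hij.symm⟩
  have hdeg : degOf dv γ + nj j ≤ q := by
    obtain ⟨α', i', hα', hnj'⟩ := hnj j
    have h₁ := hζq (γ + α) i hp.1
    have h₂ := S.degOf_add_le_of_isLMMr O hOgr hgj (x := (α', i')) hα'
    rw [degOf_add] at h₁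
    dsimp only at h₂
    omega
  have hγg := S.isLMMr_basis_smul O hgj γ
  set c := S.basis.repr (ζ i) (γ + α) / S.basis.repr ((S.basis γ • g j) i) (γ + α)
  have ht : c • S.basis γ ∈ S.filtrationA dv (nj j) q :=
    Submodule.smul_mem _ c (Submodule.subset_span ⟨γ, hdeg, rfl⟩)
  set ζ' := ζ - (c • S.basis γ) • g j
  have hζ'N : ζ' ∈ Submodule.span A (Set.range g) :=
    sub_mem hζN (Submodule.smul_mem _ _ (Submodule.subset_span ⟨j, rfl⟩))
  have hζ'q : ζ' ∈ S.filtrationL dv b q := sub_mem hζq (S.smul_mem_filtrationL hgr ht (hg j))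
  have hζ'lt : ∀ x ∈ S.MSupp ζ', O.lt x (γ + α, i) := fun x hx =>
    hp.lt_of_mem_msupp_sub_smul hγg (by rwa [← smul_assoc])
  have hζ' : ζ' ∈ P := by
    rcases eq_or_ne ζ' 0 with h0 | h0
    · rw [h0]
      exact zero_mem P
    · obtain ⟨p', hp'⟩ := S.exists_isLMMr O h0
      exact ih p' (hζ'lt p' hp'.1) ζ' hp' hζ'N hζ'q
  rw [← sub_add_cancel ζ ((c • S.basis γ) • g j)]
  exact add_mem hζ' (Submodule.smul_mem_sumSMul g ht)

end SolvAlg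

theorem solvAlg_GB_is_standard_basis_general {K : Type*} [Field K] {A : Type*} [Ring A]
    [Algebra K A] {n : ℕ} (S : SolvAlg K A n)
    (dv : Fin n → ℕ)
    (hgr : ∀ α β, S.ord.lt α β → degOf dv α ≤ degOf dv β)
    {s : ℕ} (b : Fin s → ℕ) (O : ModOrder S s)
    (hOgr : ∀ p q : (Fin n → ℕ) × Fin s,
      O.lt p q → degOf dv p.1 + b p.2 ≤ degOf dv q.1 + b q.2)
    {m : ℕ} (g : Fin m → (Fin s → A))
    (hGB : SolvAlg.IsGBrel S O.lt
      ((Submodule.span A (Set.range g) : Submodule A (Fin s → A)) : Set (Fin s → A))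
      (Set.range g))
    (nj : Fin m → ℕ)
    (hnj₁ : ∀ (j : Fin m) (α : Fin n → ℕ) (i : Fin s),
      S.basis.repr (g j i) α ≠ 0 → degOf dv α + b i ≤ nj j)
    (hnj₂ : ∀ j : Fin m, ∃ (α : Fin n → ℕ) (i : Fin s),
      S.basis.repr (g j i) α ≠ 0 ∧ degOf dv α + b i = nj j) :
    ∀ (q : ℕ) (ξ : Fin s → A),
      (ξ ∈ Submodule.span A (Set.range g) ∧
        ∀ (α : Fin n → ℕ) (i : Fin s), S.basis.repr (ξ i) α ≠ 0 → degOf dv α + b i ≤ q) ↔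
      ∃ f : Fin m → A,
        (∀ j, f j ∈ Submodule.span K {x : A | ∃ α, degOf dv α + nj j ≤ q ∧ x = S.basis α}) ∧
        ξ = ∑ j, f j • g j := by
  intro q ξ
  have hg : ∀ j, g j ∈ S.filtrationL dv b (nj j) := hnj₁
  constructor
  · rintro ⟨hξN, hξq⟩
    exact Submodule.mem_sumSMul.1 (S.mem_sumSMul_of_isGBrel hgr O hOgr hGB hg hnj₂ hξN hξq)
  · intro h
    have hξ : ξ ∈ Submodule.sumSMul (fun j => S.filtrationA dv (nj j) q) g :=
      Submodule.mem_sumSMul.2 h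
    exact ⟨Submodule.sumSMul_le_span _ g hξ, S.sumSMul_filtrationA_le hgr hg q hξ⟩

/-- Theorem 5.4.8: let `A` be a solvable polynomial algebra whose monomial ordering is a
graded monomial ordering with respect to the positive-degree function given by `dv` (so
that `A` is `ℕ`-filtered by `F_pA = K`-span`{a^α : d(a^α) ≤ p}`), let `L = A^s` be the
filtered free module determined by the shifts `b`, and let `≺_{e-gr}` be a graded left
monomial ordering on the monomials of `L`.  If `𝒢 = {g_1,…,g_m}` is a left Gröbner basis
of the submodule `N = Σ A g_j` with respect to `≺_{e-gr}`, then `𝒢` is a standard basis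
of `N` with respect to the induced filtration:
`F_qN = N ∩ F_qL = Σ_j (Σ_{p + n_j ≤ q} F_pA) g_j` for all `q`, where `n_j` is the
fil-degree of `g_j`. -/
theorem solvAlg_GB_is_standard_basis {K : Type*} [Field K] {A : Type*} [Ring A]
    [Algebra K A] {n : ℕ} (S : SolvAlg K A n)
    (dv : Fin n → ℕ) (hdv : ∀ i, 0 < dv i)
    (hgr : ∀ α β, S.ord.lt α β → degOf dv α ≤ degOf dv β)
    {s : ℕ} (b : Fin s → ℕ) (O : ModOrder S s)
    (hOgr : ∀ p q : (Fin n → ℕ) × Fin s,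
      O.lt p q → degOf dv p.1 + b p.2 ≤ degOf dv q.1 + b q.2)
    {m : ℕ} (g : Fin m → (Fin s → A)) (hg0 : ∀ j, g j ≠ 0)
    (hGB : SolvAlg.IsGBrel S O.lt
      ((Submodule.span A (Set.range g) : Submodule A (Fin s → A)) : Set (Fin s → A))
      (Set.range g))
    (nj : Fin m → ℕ)
    (hnj₁ : ∀ (j : Fin m) (α : Fin n → ℕ) (i : Fin s),
      S.basis.repr (g j i) α ≠ 0 → degOf dv α + b i ≤ nj j)
    (hnj₂ : ∀ j : Fin m, ∃ (α : Fin n → ℕ) (i : Fin s),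
      S.basis.repr (g j i) α ≠ 0 ∧ degOf dv α + b i = nj j) :
    ∀ (q : ℕ) (ξ : Fin s → A),
      (ξ ∈ Submodule.span A (Set.range g) ∧
        ∀ (α : Fin n → ℕ) (i : Fin s), S.basis.repr (ξ i) α ≠ 0 → degOf dv α + b i ≤ q) ↔
      ∃ f : Fin m → A,
        (∀ j, f j ∈ Submodule.span K {x : A | ∃ α, degOf dv α + nj j ≤ q ∧ x = S.basis α}) ∧
        ξ = ∑ j, f j • g j :=
  solvAlg_GB_is_standard_basis_general S dv hgr b O hOgr g hGB nj hnj₁ hnj₂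
end
end
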